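/- Let ξ₁, …, ξₙ be i.i.d. Bernoulli(p), 0 < p < 1, with cyclic convention, V₁ := Σ_i (ξ_i - p), V₂ := Σ_i (ξ_i ξ_{i+1} - p²). Construct (ξ'₁, …, ξ'ₙ) by choosing I uniformly in {1,…,n} and replacing ξ_I with an independent copy; let V'₁, V'₂ be the corresponding statistics. Then E[V'₁ - V₁ | ξ] = -(1/n) V₁ and E[V'₂ - V₂ | ξ] = -(2/n) V₂ + (2p/n) V₁. -/

import Mathlib

open MeasureTheory ProbabilityTheory

/-- The Bernoulli(p) distribution on ℝ, placing mass `p` at `1` and `1-p` at `0`. -/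
noncomputable def bernMeasure (p : ℝ) : Measure ℝ :=
  ENNReal.ofReal p • Measure.dirac (1 : ℝ) + ENNReal.ofReal (1 - p) • Measure.dirac 0

/-- The probability space carrying an i.i.d. Bernoulli(p) sequence `ω.1`, an independent
i.i.d. Bernoulli(p) sequence of fresh copies `ω.2.1`, and an independent uniform index
`ω.2.2`. -/
noncomputable def resampleMeasure (n : ℕ) [NeZero n] (p : ℝ) :
    Measure ((Fin n → ℝ) × (Fin n → ℝ) × Fin n) :=
  (Measure.pi fun _ : Fin n => bernMeasure p).prod
    ((Measure.pi fun _ : Fin n => bernMeasure p).prod (PMF.uniformOfFintype (Fin n)).toMeasure)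

/-!
Given `ξ`, the pair (fresh copy, index) is still distributed as `Bernoulli(p)^n ⊗ Uniform`, so
the conditional expectation is the integral over it. Resampling site `j` changes `V₁` by
`ξ'_j - ξ_j` and, as soon as the two cyclic neighbours `j ± 1` differ from `j`, changes `V₂` by
`(ξ'_j - ξ_j)(ξ_{j+1} + ξ_{j-1})`. Averaging `ξ'_j` (mean `p`) and then `j` turns an increment
`(ξ'_j - ξ_j) w_j` into `n⁻¹ ∑_j (p - ξ_j) w_j`, and shifting the cyclic sums identifies this with
the claimed combinations of `V₁` and `V₂`.
-/

lemma sum_update_sub_sum {ι M : Type*} [Fintype ι] [DecidableEq ι] [AddCommGroup M]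
    (x : ι → M) (j : ι) (c : M) :
    ∑ i, Function.update x j c i - ∑ i, x i = c - x j := by
  rw [Finset.sum_update_of_mem (Finset.mem_univ j), Finset.sdiff_singleton_eq_erase,
    ← Finset.add_sum_erase _ x (Finset.mem_univ j)]
  abel

lemma sum_update_mul_shift_sub {ι R : Type*} [AddGroup ι] [Fintype ι] [DecidableEq ι]
    [CommRing R] {s : ι} (hs : s ≠ 0) (x : ι → R) (j : ι) (c : R) :
    ∑ i, Function.update x j c i * Function.update x j c (i + s) - ∑ i, x i * x (i + s)
      = (c - x j) * (x (j + s) + x (j - s)) := by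
  set u := Function.update x j c
  have hjs : j - s ≠ j := fun h => hs (sub_eq_self.mp h)
  have hsj : j + s ≠ j := fun h => hs (add_eq_left.mp h)
  have hoff : ∀ i ∉ ({j - s, j} : Finset ι), u i * u (i + s) - x i * x (i + s) = 0 := by
    intro i hi
    simp only [Finset.mem_insert, Finset.mem_singleton, not_or] at hi
    have hi' : i + s ≠ j := fun h => hi.1 (eq_sub_of_add_eq h)
    simp [u, Function.update_of_ne hi.2, Function.update_of_ne hi']
  rw [← Finset.sum_sub_distrib, ← Finset.sum_subset (Finset.subset_univ _)
    (fun i _ => hoff i), Finset.sum_pair hjs]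
  simp [u, Function.update_of_ne hjs, Function.update_of_ne hsj]
  ring

lemma sum_sub_mul_shift_add_shift {ι R : Type*} [AddGroup ι] [Fintype ι] [CommRing R]
    (x : ι → R) (p : R) (s : ι) :
    ∑ j, (p - x j) * (x (j + s) + x (j - s)) = 2 * (p * ∑ j, x j - ∑ j, x j * x (j + s)) := by
  have h₁ : ∑ j, x (j + s) = ∑ j, x j := Equiv.sum_comp (Equiv.addRight s) x
  have h₂ : ∑ j, x (j - s) = ∑ j, x j := Equiv.sum_comp (Equiv.subRight s) x
  have h₃ : ∑ j, x j * x (j - s) = ∑ j, x j * x (j + s) := by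
    rw [← Equiv.sum_comp (Equiv.addRight s)]
    simp [mul_comm]
  simp only [mul_add, sub_mul, Finset.sum_add_distrib, Finset.sum_sub_distrib, ← Finset.mul_sum,
    h₁, h₂, h₃]
  ring

lemma Fin.one_ne_zero_of_two_le {n : ℕ} [NeZero n] (hn : 2 ≤ n) : (1 : Fin n) ≠ 0 := by
  rw [Ne, Fin.ext_iff, Fin.val_one', Fin.val_zero, Nat.mod_eq_of_lt hn]
  exact one_ne_zero

lemma measurable_apply_of_countable {γ ι β : Type*} [MeasurableSpace γ] [MeasurableSpace ι]
    [MeasurableSpace β] [Countable ι] [MeasurableSingletonClass ι] {F : γ → ι → β} {J : γ → ι}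
    (hF : ∀ i, Measurable fun c => F c i) (hJ : Measurable J) :
    Measurable fun c => F c (J c) :=
  (measurable_from_prod_countable_left (f := fun q : γ × ι => F q.1 q.2) hF).comp
    (measurable_id.prodMk hJ)

lemma condExp_comap_fst_ae_eq_integral {α β E : Type*} [MeasurableSpace α] [MeasurableSpace β]
    [NormedAddCommGroup E] [NormedSpace ℝ E] [CompleteSpace E]
    {μ : Measure α} {ν : Measure β} [IsFiniteMeasure μ] [IsProbabilityMeasure ν]
    {f : α × β → E} (hf : Integrable f (μ.prod ν)) :
    (μ.prod ν)[f | MeasurableSpace.comap Prod.fst inferInstance]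
      =ᵐ[μ.prod ν] fun ω => ∫ y, f (ω.1, y) ∂ν := by
  have hG : Integrable (fun x => ∫ y, f (x, y) ∂ν) μ := hf.integral_prod_left
  obtain ⟨G, hG_meas, hG_eq⟩ := hG.aestronglyMeasurable
  refine (ae_eq_condExp_of_forall_setIntegral_eq measurable_fst.comap_le hf ?_ ?_ ?_).symm
  · exact fun s _ _ => (hG.comp_fst ν).integrableOn
  · rintro s ⟨t, -, rfl⟩ -
    rw [← Set.prod_univ, setIntegral_prod _ hf.integrableOn,
      setIntegral_prod _ (hG.comp_fst ν).integrableOn]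
    simp
  · exact ⟨fun ω => G ω.1, hG_meas.comp_measurable (comap_measurable _),
      Measure.quasiMeasurePreserving_fst.ae_eq hG_eq⟩

lemma integral_resample_increment {n : ℕ} [NeZero n] {μ : Measure ℝ} [IsProbabilityMeasure μ]
    (hμ : Integrable id μ) (x w : Fin n → ℝ) :
    ∫ y, (y.1 y.2 - x y.2) * w y.2
        ∂((Measure.pi fun _ : Fin n => μ).prod (PMF.uniformOfFintype (Fin n)).toMeasure)
      = (n : ℝ)⁻¹ * ∑ j, (∫ t, t ∂μ - x j) * w j := by
  have hslice (j : Fin n) :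
      Integrable (fun ξ : Fin n → ℝ => (ξ j - x j) * w j) (Measure.pi fun _ => μ) :=
    ((integrable_eval hμ).sub (integrable_const _)).mul_const _
  have hint : Integrable (fun y : (Fin n → ℝ) × Fin n => (y.1 y.2 - x y.2) * w y.2)
      ((Measure.pi fun _ : Fin n => μ).prod (PMF.uniformOfFintype (Fin n)).toMeasure) := by
    refine (integrable_prod_iff' ?_).2 ⟨.of_forall hslice, .of_finite⟩
    refine (measurable_from_prod_countable_left fun j => ?_).aestronglyMeasurable
    fun_prop
  rw [integral_prod_symm _ hint, PMF.integral_eq_sum, Finset.mul_sum]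
  refine Finset.sum_congr rfl fun j _ => ?_
  simp only [PMF.uniformOfFintype_apply, Fintype.card_fin, ENNReal.toReal_inv,
    ENNReal.toReal_natCast, smul_eq_mul]
  rw [integral_mul_const,
    integral_sub (integrable_eval (μ := fun _ => μ) (i := j) hμ) (integrable_const (x j)),
    integral_eval, integral_const]
  simp

instance isFiniteMeasure_bernMeasure (p : ℝ) : IsFiniteMeasure (bernMeasure p) := by
  constructor
  simp [bernMeasure, ENNReal.add_lt_top]

lemma isProbabilityMeasure_bernMeasure {p : ℝ} (hp0 : 0 ≤ p) (hp1 : p ≤ 1) :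
    IsProbabilityMeasure (bernMeasure p) := by
  constructor
  simp [bernMeasure, ← ENNReal.ofReal_add hp0 (sub_nonneg.2 hp1)]

lemma ae_bernMeasure_mem_Icc (p : ℝ) : ∀ᵐ x ∂bernMeasure p, x ∈ Set.Icc (0 : ℝ) 1 := by
  simp [bernMeasure, ae_iff]

lemma integral_id_bernMeasure {p : ℝ} (hp0 : 0 ≤ p) :
    ∫ x, x ∂bernMeasure p = p := by
  rw [bernMeasure, integral_add_measure, integral_smul_measure, integral_smul_measure,
    integral_dirac, integral_dirac, ENNReal.toReal_ofReal hp0]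
  · simp
  all_goals exact (integrable_dirac (by simp)).smul_measure ENNReal.ofReal_ne_top

lemma integrable_id_bernMeasure (p : ℝ) : Integrable id (bernMeasure p) :=
  ((integrable_dirac (by simp)).smul_measure ENNReal.ofReal_ne_top).add_measure
    ((integrable_dirac (by simp)).smul_measure ENNReal.ofReal_ne_top)

lemma ae_pi_bernMeasure_mem_Icc (p : ℝ) (n : ℕ) :
    ∀ᵐ ξ ∂(Measure.pi fun _ : Fin n => bernMeasure p), ∀ i, ξ i ∈ Set.Icc (0 : ℝ) 1 :=
  Filter.eventually_all.2 fun _ => Measure.tendsto_eval_ae_ae.eventually (ae_bernMeasure_mem_Icc p)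

theorem condExp_resampleMeasure {n : ℕ} [NeZero n] {p : ℝ} (hp0 : 0 ≤ p) (hp1 : p ≤ 1)
    {w : (Fin n → ℝ) → Fin n → ℝ} (hw : ∀ j, Measurable fun x => w x j) {C : ℝ}
    (hC : ∀ x : Fin n → ℝ, (∀ i, x i ∈ Set.Icc (0 : ℝ) 1) → ∀ j, |w x j| ≤ C) :
    (resampleMeasure n p)[fun ω => (ω.2.1 ω.2.2 - ω.1 ω.2.2) * w ω.1 ω.2.2
        | MeasurableSpace.comap Prod.fst inferInstance]
      =ᵐ[resampleMeasure n p] fun ω => (n : ℝ)⁻¹ * ∑ j, (p - ω.1 j) * w ω.1 j := by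
  have := isProbabilityMeasure_bernMeasure hp0 hp1
  have hmeas : Measurable fun ω : (Fin n → ℝ) × (Fin n → ℝ) × Fin n =>
      (ω.2.1 ω.2.2 - ω.1 ω.2.2) * w ω.1 ω.2.2 := by
    refine (measurable_apply_of_countable (fun j => ?_) (by fun_prop)).sub
      (measurable_apply_of_countable (fun j => ?_) (by fun_prop)) |>.mul
      (measurable_apply_of_countable (fun j => (hw j).comp measurable_fst) (by fun_prop))
    all_goals fun_prop
  have hcube := ae_pi_bernMeasure_mem_Icc p n
  have hbound :
      ∀ᵐ ω ∂resampleMeasure n p, ‖(ω.2.1 ω.2.2 - ω.1 ω.2.2) * w ω.1 ω.2.2‖ ≤ 1 * C := by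
    filter_upwards [Measure.quasiMeasurePreserving_fst.ae hcube,
      Measure.quasiMeasurePreserving_snd.ae (Measure.quasiMeasurePreserving_fst.ae hcube)]
      with ω hξ hξ'
    rw [Real.norm_eq_abs, abs_mul]
    refine mul_le_mul ?_ (hC _ hξ _) (abs_nonneg _) zero_le_one
    obtain ⟨h0, h1⟩ := hξ ω.2.2
    obtain ⟨h0', h1'⟩ := hξ' ω.2.2
    rw [abs_le]; constructor <;> linarith
  refine (condExp_comap_fst_ae_eq_integral
    (Integrable.of_bound hmeas.aestronglyMeasurable _ hbound)).trans
    (.of_forall fun ω => ?_)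
  simpa [integral_id_bernMeasure hp0] using
    integral_resample_increment (integrable_id_bernMeasure p) ω.1 (w ω.1)

/-- single-site resampling for runs. With `ξ = ω.1`, uniform index `I = ω.2.2`,
and `ξ' = Function.update ξ I (ω.2.1 I)` (one coordinate replaced by an independent copy),
`V₁(f) = ∑ (f i - p)` and `V₂(f) = ∑ (f i f_{i+1} - p²)` (cyclic convention), we have
`E[V₁' - V₁ | ξ] = -(1/n) V₁` and `E[V₂' - V₂ | ξ] = -(2/n) V₂ + (2p/n) V₁`. -/
theorem runs_resampling_regression
    (n : ℕ) [NeZero n] (hn : 3 ≤ n) (p : ℝ) (hp0 : 0 < p) (hp1 : p < 1) :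
    ((resampleMeasure n p)[(fun ω : (Fin n → ℝ) × (Fin n → ℝ) × Fin n =>
          (∑ i, (Function.update ω.1 ω.2.2 (ω.2.1 ω.2.2) i - p)) - ∑ i, (ω.1 i - p))
        | MeasurableSpace.comap (Prod.fst : (Fin n → ℝ) × (Fin n → ℝ) × Fin n → (Fin n → ℝ))
            inferInstance]
      =ᵐ[resampleMeasure n p] fun ω => -(1 / (n : ℝ)) * ∑ i, (ω.1 i - p)) ∧
    ((resampleMeasure n p)[(fun ω : (Fin n → ℝ) × (Fin n → ℝ) × Fin n =>
          (∑ i : Fin n, (Function.update ω.1 ω.2.2 (ω.2.1 ω.2.2) i *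
              Function.update ω.1 ω.2.2 (ω.2.1 ω.2.2) (i + 1) - p ^ 2))
            - ∑ i : Fin n, (ω.1 i * ω.1 (i + 1) - p ^ 2))
        | MeasurableSpace.comap (Prod.fst : (Fin n → ℝ) × (Fin n → ℝ) × Fin n → (Fin n → ℝ))
            inferInstance]
      =ᵐ[resampleMeasure n p] fun ω =>
        -(2 / (n : ℝ)) * ∑ i : Fin n, (ω.1 i * ω.1 (i + 1) - p ^ 2)
          + (2 * p / (n : ℝ)) * ∑ i, (ω.1 i - p)) := by
  have hn0 : (n : ℝ) ≠ 0 := NeZero.ne _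
  constructor
  · refine (condExp_congr_ae (.of_forall fun ω => ?_)).trans
      ((condExp_resampleMeasure hp0.le hp1.le (w := fun _ _ => 1) (fun _ => measurable_const)
        (C := 1) (fun _ _ _ => by simp)).trans (.of_forall fun ω => ?_))
    · simpa [Finset.sum_sub_distrib] using sum_update_sub_sum ω.1 ω.2.2 (ω.2.1 ω.2.2)
    · simp only [mul_one, Finset.sum_sub_distrib, Finset.sum_const, Finset.card_univ,
        Fintype.card_fin, nsmul_eq_mul]
      field_simp
      ring
  · refine (condExp_congr_ae (.of_forall fun ω => ?_)).trans
      ((condExp_resampleMeasure hp0.le hp1.le (w := fun x j => x (j + 1) + x (j - 1))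
        (fun _ => by fun_prop) (C := 2) (fun x hx j => ?_)).trans (.of_forall fun ω => ?_))
    · simpa [Finset.sum_sub_distrib] using
        sum_update_mul_shift_sub (Fin.one_ne_zero_of_two_le (by omega)) ω.1 ω.2.2 (ω.2.1 ω.2.2)
    · obtain ⟨h0, h1⟩ := hx (j + 1)
      obtain ⟨h0', h1'⟩ := hx (j - 1)
      rw [abs_le]; constructor <;> linarith
    · simp only [sum_sub_mul_shift_add_shift, Finset.sum_sub_distrib, Finset.sum_const,
        Finset.card_univ, Fintype.card_fin, nsmul_eq_mul]
      field_simp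
      ring
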